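/- Let μ be a Borel probability measure on [0,1] and A a positive definite n×n complex matrix. Then the second Fréchet derivative of the map X ↦ φ_μ(A,X) at X = A is positive semidefinite as a quadratic form: D²(φ_μ(A,·))(A)[Y,Y] ≥ 0 for every Hermitian matrix Y. -/

import Mathlib

/-!
With `B = A^{1/2}` and `S = B⁻¹ Y B⁻¹`, the argument of `f_μ` in `A σ_μ (A + tY)` is `1 + tS`.
Diagonalising `S = U diag(d) U*` gives `Tr (A σ_μ (A + tY)) = ∑ᵢ aᵢ f_μ(1 + t dᵢ)` with
`aᵢ = (U* A U)ᵢᵢ ≥ 0`, so `t ↦ φ_μ(A, A + tY)` is affine minus a nonnegative combination of the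
`f_μ(1 + t dᵢ)`. Its second derivative at `0` is therefore `-f_μ''(1) ∑ᵢ aᵢ dᵢ²`, and
`f_μ''(x) = -2 ∫ λ(1-λ) / ((1-λ)x + λ)³ dμ ≤ 0` for `x > 0` (differentiation under the integral,
dominated on `[0,1]` since the denominators stay away from `0`).
-/

open MeasureTheory Matrix
open scoped ComplexOrder

/-- `f_μ(x) = ∫_{[0,1]} x / ((1-λ)x + λ) dμ(λ)`. -/
noncomputable def fmu (μ : Measure ℝ) (x : ℝ) : ℝ := ∫ l, x / ((1 - l) * x + l) ∂μ

/-- The center of mass `c(μ) = ∫_{[0,1]} λ dμ(λ)`. -/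
noncomputable def cmu (μ : Measure ℝ) : ℝ := ∫ l, l ∂μ

/-- The positive square root of a positive definite matrix, via functional calculus. -/
noncomputable def matSqrt {n : ℕ} (A : Matrix (Fin n) (Fin n) ℂ) : Matrix (Fin n) (Fin n) ℂ :=
  cfc Real.sqrt A

/-- The Kubo–Ando mean `A σ_μ B = A^{1/2} f_μ(A^{-1/2} B A^{-1/2}) A^{1/2}`. -/
noncomputable def kuboAndo {n : ℕ} (μ : Measure ℝ) (A B : Matrix (Fin n) (Fin n) ℂ) :
    Matrix (Fin n) (Fin n) ℂ :=
  matSqrt A * cfc (fmu μ) ((matSqrt A)⁻¹ * B * (matSqrt A)⁻¹) * matSqrt A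

/-- The generalized quantum Hellinger divergence
`φ_μ(A,B) = Tr((1-c(μ))A + c(μ)B - A σ_μ B)`. -/
noncomputable def qhd {n : ℕ} (μ : Measure ℝ) (A B : Matrix (Fin n) (Fin n) ℂ) : ℝ :=
  (((1 - cmu μ) • A + cmu μ • B - kuboAndo μ A B).trace).re

open Filter Topology Set

section Calculus

variable {𝕜 F : Type*} [NontriviallyNormedField 𝕜] [NormedAddCommGroup F] [NormedSpace 𝕜 F]

theorem iteratedDeriv_two_eq_of_hasDerivAt {g g' : 𝕜 → F} {g'' : F} {x : 𝕜}
    (hg : ∀ᶠ t in 𝓝 x, HasDerivAt g (g' t) t) (hg' : HasDerivAt g' g'' x) :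
    iteratedDeriv 2 g x = g'' := by
  have hderiv : deriv g =ᶠ[𝓝 x] g' := hg.mono fun t ht => ht.deriv
  rw [iteratedDeriv_succ, iteratedDeriv_one, hderiv.deriv_eq, hg'.deriv]

end Calculus

theorem iteratedDeriv_two_affine_sub_sum_comp {ι : Type*} [Fintype ι] {f f' : ℝ → ℝ}
    {x₀ f'' : ℝ} (hf : ∀ᶠ x in 𝓝 x₀, HasDerivAt f (f' x) x) (hf' : HasDerivAt f' f'' x₀)
    (c₀ c₁ : ℝ) (a d : ι → ℝ) :
    iteratedDeriv 2 (fun t => c₀ + c₁ * t - ∑ i, a i * f (x₀ + t * d i)) 0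
      = -(∑ i, a i * d i ^ 2) * f'' := by
  have hline : ∀ i t, HasDerivAt (fun t : ℝ => x₀ + t * d i) (d i) t := fun i t => by
    simpa using ((hasDerivAt_id t).mul_const (d i)).const_add x₀
  have hf_line : ∀ᶠ t in 𝓝 (0 : ℝ), ∀ i, HasDerivAt f (f' (x₀ + t * d i)) (x₀ + t * d i) :=
    eventually_all.2 fun i => ((hline i 0).continuousAt.tendsto.mono_right
      (by simp)).eventually hf
  refine iteratedDeriv_two_eq_of_hasDerivAt
    (g' := fun t => c₁ - ∑ i, a i * (f' (x₀ + t * d i) * d i)) ?_ ?_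
  · filter_upwards [hf_line] with t ht
    have hlin : HasDerivAt (fun t : ℝ => c₀ + c₁ * t) c₁ t := by
      simpa using ((hasDerivAt_id t).const_mul c₁).const_add c₀
    exact hlin.fun_sub (HasDerivAt.fun_sum fun i _ => ((ht i).comp t (hline i t)).const_mul (a i))
  · have hsum : HasDerivAt (fun t => ∑ i, a i * (f' (x₀ + t * d i) * d i))
        (∑ i, a i * (f'' * d i * d i)) 0 := HasDerivAt.fun_sum fun i _ =>
      ((hf'.comp_of_eq 0 (hline i 0) (by simp)).mul_const (d i)).const_mul (a i)
    convert (hasDerivAt_const (0 : ℝ) c₁).fun_sub hsum using 1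
    simp only [zero_sub, Finset.sum_mul, ← Finset.sum_neg_distrib]
    exact Finset.sum_congr rfl fun i _ => by ring

theorem hasDerivAt_integral_of_bounded {α : Type*} [MeasurableSpace α] {μ : Measure α}
    [IsFiniteMeasure μ] {S : Set α} (hμ : ∀ᵐ l ∂μ, l ∈ S) {F F' : ℝ → α → ℝ} {s : Set ℝ}
    {x₀ C C' : ℝ} (hs : s ∈ 𝓝 x₀) (hF_meas : ∀ x, Measurable (F x))
    (hF'_meas : Measurable (F' x₀)) (hF_le : ∀ l ∈ S, |F x₀ l| ≤ C)
    (hF'_le : ∀ l ∈ S, ∀ x ∈ s, |F' x l| ≤ C')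
    (hF' : ∀ l ∈ S, ∀ x ∈ s, HasDerivAt (F · l) (F' x l) x) :
    HasDerivAt (fun x => ∫ l, F x l ∂μ) (∫ l, F' x₀ l ∂μ) x₀ :=
  (hasDerivAt_integral_of_dominated_loc_of_deriv_le hs
    (.of_forall fun x => (hF_meas x).aestronglyMeasurable)
    ((integrable_const C).mono' (hF_meas x₀).aestronglyMeasurable (hμ.mono hF_le))
    hF'_meas.aestronglyMeasurable (hμ.mono hF'_le) (integrable_const C') (hμ.mono hF')).2

theorem min_le_one_sub_mul_add {l : ℝ} (hl : l ∈ Icc (0 : ℝ) 1) (x : ℝ) :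
    min x 1 ≤ (1 - l) * x + l := by
  nlinarith [mul_nonneg (sub_nonneg.2 hl.2) (sub_nonneg.2 (min_le_left x 1)),
    mul_nonneg hl.1 (sub_nonneg.2 (min_le_right x 1))]

theorem exists_pos_forall_le_one_sub_mul_add {x : ℝ} (hx : 0 < x) :
    ∃ m > 0, ∀ l ∈ Icc (0 : ℝ) 1, ∀ y ∈ Ioi (x / 2), m ≤ (1 - l) * y + l :=
  ⟨min (x / 2) 1, lt_min (by linarith) one_pos,
    fun l hl y hy => (min_le_min_right 1 hy.le).trans (min_le_one_sub_mul_add hl y)⟩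

theorem hasDerivAt_div_one_sub_mul_add {l x : ℝ} (hx : (1 - l) * x + l ≠ 0) :
    HasDerivAt (fun y => y / ((1 - l) * y + l)) (l / ((1 - l) * x + l) ^ 2) x := by
  have hden : HasDerivAt (fun y => (1 - l) * y + l) (1 - l) x := by
    simpa using ((hasDerivAt_id x).const_mul (1 - l)).add_const l
  refine ((hasDerivAt_id' x).div hden hx).congr_deriv ?_
  field_simp
  ring

theorem hasDerivAt_div_one_sub_mul_add_sq {l x : ℝ} (hx : (1 - l) * x + l ≠ 0) :
    HasDerivAt (fun y => l / ((1 - l) * y + l) ^ 2)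
      (-2 * l * (1 - l) / ((1 - l) * x + l) ^ 3) x := by
  have hden : HasDerivAt (fun y => (1 - l) * y + l) (1 - l) x := by
    simpa using ((hasDerivAt_id x).const_mul (1 - l)).add_const l
  refine ((hasDerivAt_const x l).div (hden.pow 2) (pow_ne_zero 2 hx)).congr_deriv ?_
  simp only [Pi.pow_apply]
  field_simp
  ring

noncomputable def fmuDeriv (μ : Measure ℝ) (x : ℝ) : ℝ := ∫ l, l / ((1 - l) * x + l) ^ 2 ∂μ

noncomputable def fmuDeriv2 (μ : Measure ℝ) (x : ℝ) : ℝ :=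
  ∫ l, -2 * l * (1 - l) / ((1 - l) * x + l) ^ 3 ∂μ

theorem fmuDeriv2_nonpos {μ : Measure ℝ} (hμ : ∀ᵐ l ∂μ, l ∈ Icc (0 : ℝ) 1) {x : ℝ}
    (hx : 0 ≤ x) : fmuDeriv2 μ x ≤ 0 :=
  integral_nonpos_of_ae <| hμ.mono fun l hl => by
    have hD : 0 ≤ (1 - l) * x + l := by nlinarith [hl.1, hl.2]
    exact div_nonpos_of_nonpos_of_nonneg (by nlinarith [hl.1, hl.2]) (by positivity)

section Differentiation

variable {μ : Measure ℝ} [IsFiniteMeasure μ] (hμ : ∀ᵐ l ∂μ, l ∈ Icc (0 : ℝ) 1) {x : ℝ}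
  (hx : 0 < x)
include hμ hx

theorem hasDerivAt_fmu : HasDerivAt (fmu μ) (fmuDeriv μ x) x := by
  obtain ⟨m, hm, hden⟩ := exists_pos_forall_le_one_sub_mul_add hx
  have hx_mem : x ∈ Ioi (x / 2) := half_lt_self hx
  refine hasDerivAt_integral_of_bounded hμ (C := x / m) (C' := 1 / m ^ 2)
    (Ioi_mem_nhds hx_mem) (fun y => by fun_prop) (by fun_prop) (fun l hl => ?_)
    (fun l hl y hy => ?_)
    (fun l hl y hy => hasDerivAt_div_one_sub_mul_add (hm.trans_le (hden l hl y hy)).ne')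
  · rw [abs_of_nonneg (div_nonneg hx.le (hm.le.trans (hden l hl x hx_mem)))]
    exact div_le_div_of_nonneg_left hx.le hm (hden l hl x hx_mem)
  · rw [abs_of_nonneg (div_nonneg hl.1 (by positivity))]
    exact div_le_div₀ zero_le_one hl.2 (by positivity) (pow_le_pow_left₀ hm.le (hden l hl y hy) 2)

theorem hasDerivAt_fmuDeriv : HasDerivAt (fmuDeriv μ) (fmuDeriv2 μ x) x := by
  obtain ⟨m, hm, hden⟩ := exists_pos_forall_le_one_sub_mul_add hx
  have hx_mem : x ∈ Ioi (x / 2) := half_lt_self hx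
  refine hasDerivAt_integral_of_bounded hμ (C := 1 / m ^ 2) (C' := 2 / m ^ 3)
    (Ioi_mem_nhds hx_mem) (fun y => by fun_prop) (by fun_prop) (fun l hl => ?_)
    (fun l hl y hy => ?_)
    (fun l hl y hy => hasDerivAt_div_one_sub_mul_add_sq (hm.trans_le (hden l hl y hy)).ne')
  · rw [abs_of_nonneg (div_nonneg hl.1 (by positivity))]
    exact div_le_div₀ zero_le_one hl.2 (by positivity)
      (pow_le_pow_left₀ hm.le (hden l hl x hx_mem) 2)
  · have hnum : |-2 * l * (1 - l)| ≤ 2 := by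
      rw [abs_le]; constructor <;> nlinarith [hl.1, hl.2]
    rw [abs_div, abs_of_nonneg (pow_nonneg (hm.le.trans (hden l hl y hy)) 3)]
    exact div_le_div₀ zero_le_two hnum (by positivity)
      (pow_le_pow_left₀ hm.le (hden l hl y hy) 3)

end Differentiation

section Spectral

variable {ι : Type*} [Fintype ι] [DecidableEq ι] {S : Matrix ι ι ℂ}

theorem Matrix.IsHermitian.cfc_one_add_smul (hS : S.IsHermitian) (f : ℝ → ℝ) (t : ℝ) :
    cfc f (1 + t • S) = cfc (fun x => f (1 + t * x)) S := by
  rw [cfc_comp' f (fun x => 1 + t * x) S ((finite_real_spectrum.image _).continuousOn f)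
    (by fun_prop) hS.isSelfAdjoint, cfc_const_add 1 (fun x => t * x) S,
    cfc_const_mul_id t S hS.isSelfAdjoint, map_one]

theorem Matrix.IsHermitian.re_trace_mul_cfc (hS : S.IsHermitian) (M : Matrix ι ι ℂ)
    (f : ℝ → ℝ) :
    (M * cfc f S).trace.re = ∑ i, ((star (hS.eigenvectorUnitary : Matrix ι ι ℂ) * M *
      (hS.eigenvectorUnitary : Matrix ι ι ℂ)) i i).re * f (hS.eigenvalues i) := by
  set U : Matrix ι ι ℂ := (hS.eigenvectorUnitary : Matrix ι ι ℂ)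
  have hcfc : cfc f S = U * diagonal (RCLike.ofReal ∘ f ∘ hS.eigenvalues) * star U := by
    rw [hS.cfc_eq]; rfl
  rw [hcfc, ← Matrix.mul_assoc, ← Matrix.mul_assoc, trace_mul_comm, ← Matrix.mul_assoc,
    ← Matrix.mul_assoc]
  simp [Matrix.trace, Matrix.mul_diagonal, Complex.re_sum]

omit [DecidableEq ι] in
theorem Matrix.PosSemidef.re_conj_diag_nonneg {A : Matrix ι ι ℂ} (hA : A.PosSemidef)
    (U : Matrix ι ι ℂ) (i : ι) : 0 ≤ ((star U * A * U) i i).re :=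
  Complex.nonneg_iff.1 (hA.conjTranspose_mul_mul_same U).diag_nonneg |>.1

end Spectral

section KuboAndo

variable {n : ℕ} {A : Matrix (Fin n) (Fin n) ℂ}

theorem Matrix.PosSemidef.matSqrt_mul_self (hA : A.PosSemidef) : matSqrt A * matSqrt A = A := by
  have hspec : ∀ x ∈ spectrum ℝ A, 0 ≤ x := by
    rw [hA.isHermitian.spectrum_real_eq_range_eigenvalues]
    rintro _ ⟨i, rfl⟩
    exact hA.eigenvalues_nonneg i
  rw [matSqrt, ← cfc_mul .., cfc_congr fun x hx => Real.mul_self_sqrt (hspec x hx),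
    cfc_id' ℝ A hA.isHermitian.isSelfAdjoint]

theorem isHermitian_matSqrt (A : Matrix (Fin n) (Fin n) ℂ) : (matSqrt A).IsHermitian :=
  cfc_predicate _ _

theorem Matrix.PosDef.isUnit_det_matSqrt (hA : A.PosDef) : IsUnit (matSqrt A).det := by
  have hdet := hA.det_pos.ne'
  rw [← hA.posSemidef.matSqrt_mul_self, det_mul] at hdet
  exact isUnit_iff_ne_zero.2 (left_ne_zero_of_mul hdet)

theorem qhd_add_smul (μ : Measure ℝ) (A Y : Matrix (Fin n) (Fin n) ℂ) (t : ℝ) :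
    qhd μ A (A + t • Y) =
      A.trace.re + cmu μ * Y.trace.re * t - (kuboAndo μ A (A + t • Y)).trace.re := by
  simp only [qhd, trace_sub, trace_add, trace_smul, Complex.sub_re, Complex.add_re,
    Complex.real_smul, Complex.re_ofReal_mul]
  ring

theorem Matrix.PosDef.re_trace_kuboAndo_add_smul (μ : Measure ℝ) (hA : A.PosDef)
    {Y : Matrix (Fin n) (Fin n) ℂ} (hY : Y.IsHermitian) :
    ∃ a d : Fin n → ℝ, (∀ i, 0 ≤ a i) ∧
      ∀ t : ℝ, (kuboAndo μ A (A + t • Y)).trace.re = ∑ i, a i * fmu μ (1 + t * d i) := by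
  set B := matSqrt A
  have hB : B.IsHermitian := isHermitian_matSqrt A
  have hBB : B * B = A := hA.posSemidef.matSqrt_mul_self
  have hBinv : B⁻¹ * A * B⁻¹ = 1 := by
    rw [← hBB, ← Matrix.mul_assoc, nonsing_inv_mul B hA.isUnit_det_matSqrt, Matrix.one_mul,
      mul_nonsing_inv B hA.isUnit_det_matSqrt]
  have hS : (B⁻¹ * Y * B⁻¹).IsHermitian := by
    simpa only [hB.inv.eq] using isHermitian_conjTranspose_mul_mul B⁻¹ hY
  set U : Matrix (Fin n) (Fin n) ℂ := (hS.eigenvectorUnitary : Matrix (Fin n) (Fin n) ℂ)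
  refine ⟨fun i => ((star U * A * U) i i).re, hS.eigenvalues,
    hA.posSemidef.re_conj_diag_nonneg U, fun t => ?_⟩
  have hcongr : B⁻¹ * (A + t • Y) * B⁻¹ = 1 + t • (B⁻¹ * Y * B⁻¹) := by
    rw [Matrix.mul_add, Matrix.add_mul, hBinv, Matrix.mul_smul, Matrix.smul_mul]
  rw [kuboAndo, hcongr, hS.cfc_one_add_smul, trace_mul_cycle, hBB, hS.re_trace_mul_cfc]

/-- The second Fréchet derivative of `X ↦ φ_μ(A,X)` at `X = A` is positive
semidefinite as a quadratic form: `D²(φ_μ(A,·))(A)[Y,Y] ≥ 0` for every Hermitian `Y`,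
formalized via the second derivative of `t ↦ φ_μ(A, A + tY)` at `t = 0`. -/
theorem qhd_second_deriv_at_diagonal_nonneg {n : ℕ} (μ : Measure ℝ) [IsProbabilityMeasure μ]
    (hμ01 : μ (Set.Icc (0 : ℝ) 1) = 1)
    (A : Matrix (Fin n) (Fin n) ℂ) (hA : A.PosDef) :
    ∀ Y : Matrix (Fin n) (Fin n) ℂ, Y.IsHermitian →
      0 ≤ iteratedDeriv 2 (fun t : ℝ => qhd μ A (A + t • Y)) 0 := by
  intro Y hY
  have hμ : ∀ᵐ l ∂μ, l ∈ Icc (0 : ℝ) 1 :=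
    (ae_mem_iff_measure_eq measurableSet_Icc.nullMeasurableSet).2 (by rw [hμ01, measure_univ])
  obtain ⟨a, d, ha, htrace⟩ := hA.re_trace_kuboAndo_add_smul μ hY
  have hφ : (fun t : ℝ => qhd μ A (A + t • Y)) = fun t =>
      A.trace.re + cmu μ * Y.trace.re * t - ∑ i, a i * fmu μ (1 + t * d i) :=
    funext fun t => by rw [qhd_add_smul, htrace]
  rw [hφ, iteratedDeriv_two_affine_sub_sum_comp
    ((eventually_gt_nhds one_pos).mono fun x hx => hasDerivAt_fmu hμ hx)
    (hasDerivAt_fmuDeriv hμ one_pos)]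
  refine mul_nonneg_of_nonpos_of_nonpos ?_ (fmuDeriv2_nonpos hμ zero_le_one)
  exact neg_nonpos.2 (Finset.sum_nonneg fun i _ => mul_nonneg (ha i) (sq_nonneg _))
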